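/- For every P ∈ A one has Σ_{j=1}^n [X_j, δ_j P] = 0, where [x,y] = xy − yx. (Equivalently, the cyclic gradient δP = (δ₁P,…,δₙP) lies in the kernel of the map θ : Aⁿ → A, θ(v) = Σ_{j=1}^n [X_j, v_j].) -/
import Mathlib


open scoped TensorProduct

noncomputable section

/-- The free algebra `A = ℂ⟨X₁,…,Xₙ⟩` on `n` generators. -/
abbrev FA (n : ℕ) := FreeAlgebra ℂ (Fin n)

/-- The generator `X i`. -/
def X {n : ℕ} (i : Fin n) : FA n := FreeAlgebra.ι ℂ i

/-- The monomial `X_{i₁} ⋯ X_{i_m}` associated to a list of indices. -/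
def mono {n : ℕ} (l : List (Fin n)) : FA n := (l.map X).prod

lemma mono_append {n : ℕ} (a b : List (Fin n)) : mono (a ++ b) = mono a * mono b := by
  simp [mono]

lemma mono_mem_span {n : ℕ} (x : FA n) :
    x ∈ Submodule.span ℂ (Set.range (mono (n := n))) := by
  induction x using FreeAlgebra.induction with
  | grade0 c =>
      have : (algebraMap ℂ (FA n)) c = c • mono [] := by
        simp [mono, Algebra.algebraMap_eq_smul_one]
      rw [this]
      exact Submodule.smul_mem _ _ (Submodule.subset_span ⟨[], rfl⟩)
  | grade1 i =>
      refine Submodule.subset_span ⟨[i], ?_⟩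
      simp [mono, X]
  | add a b ha hb => exact Submodule.add_mem _ ha hb
  | mul a b ha hb =>
      induction ha using Submodule.span_induction with
      | mem x hx =>
          induction hb using Submodule.span_induction with
          | mem y hy =>
              obtain ⟨la, rfl⟩ := hx
              obtain ⟨lb, rfl⟩ := hy
              exact Submodule.subset_span ⟨la ++ lb, mono_append la lb⟩
          | zero => simpa using Submodule.zero_mem _
          | add y z _ _ hy hz => rw [mul_add]; exact Submodule.add_mem _ hy hz
          | smul c y _ hy => rw [mul_smul_comm]; exact Submodule.smul_mem _ _ hy
      | zero => simpa using Submodule.zero_mem _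
      | add y z _ _ hy hz => rw [add_mul]; exact Submodule.add_mem _ hy hz
      | smul c y _ hy => rw [smul_mul_assoc]; exact Submodule.smul_mem _ _ hy

lemma key {n : ℕ} (δ : Fin n → (FA n →ₗ[ℂ] FA n))
    (hδ : ∀ (j : Fin n) (l : List (Fin n)),
      δ j (mono l) = ∑ k : Fin l.length,
        if l.get k = j then mono (l.drop (k.val + 1)) * mono (l.take k.val) else 0)
    (l : List (Fin n)) :
    ∑ j : Fin n, (X j * δ j (mono l) - δ j (mono l) * X j) = 0 := by
  simp only [hδ, Finset.mul_sum, Finset.sum_mul, ← Finset.sum_sub_distrib]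
  rw [Finset.sum_comm]
  have step : ∀ k : Fin l.length,
      (∑ j : Fin n, (X j * (if l.get k = j then mono (l.drop (k.val + 1)) * mono (l.take k.val) else 0)
        - (if l.get k = j then mono (l.drop (k.val + 1)) * mono (l.take k.val) else 0) * X j))
      = (mono (l.drop k.val) * mono (l.take k.val)
          - mono (l.drop (k.val + 1)) * mono (l.take (k.val + 1))) := by
    intro k
    rw [Finset.sum_eq_single (l.get k)]
    · simp only [eq_self_iff_true, if_true]
      congr 1
      · -- X (l.get k) * (drop (k+1) * take k) = drop k * take k
        have h1 : l.drop k.val = l.get k :: l.drop (k.val + 1) := by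
          rw [List.drop_eq_getElem_cons k.isLt]; rfl
        have mc : mono (l.get k :: l.drop (k.val + 1)) = X (l.get k) * mono (l.drop (k.val + 1)) := by
          simp only [mono, List.map_cons, List.prod_cons]
        rw [h1, mc, mul_assoc]
      · -- (drop (k+1) * take k) * X (l.get k) = drop (k+1) * take (k+1)
        have h2 : l.take (k.val + 1) = l.take k.val ++ [l.get k] := by
          rw [List.take_succ]
          simp [List.getElem?_eq_getElem k.isLt]

        rw [h2, mono_append]
        have : mono [l.get k] = X (l.get k) := by simp [mono]
        rw [this, mul_assoc]
    · intro j _ hj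
      rw [if_neg (fun h => hj h.symm)]
      simp
    · intro h
      exact absurd (Finset.mem_univ _) h
  rw [Finset.sum_congr rfl (fun k _ => step k)]
  -- telescoping
  rw [Fin.sum_univ_eq_sum_range
    (fun k => mono (l.drop k) * mono (l.take k) - mono (l.drop (k + 1)) * mono (l.take (k + 1)))]
  rw [Finset.sum_range_sub' (fun k => mono (l.drop k) * mono (l.take k))]
  simp [mono]

/-- for every `P ∈ A`, `Σ_j [X_j, δ_j P] = 0`; i.e. the cyclic gradient lies
in the kernel of `θ(v) = Σ_j [X_j, v_j]`. -/
theorem stmt14 {n : ℕ} (hn : 1 ≤ n)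
    (δ : Fin n → (FA n →ₗ[ℂ] FA n))
    (hδ : ∀ (j : Fin n) (l : List (Fin n)),
      δ j (mono l) = ∑ k : Fin l.length,
        if l.get k = j then mono (l.drop (k.val + 1)) * mono (l.take k.val) else 0) :
    ∀ P : FA n, ∑ j : Fin n, (X j * δ j P - δ j P * X j) = 0 := by
  intro P
  induction mono_mem_span P using Submodule.span_induction with
  | mem x hx => obtain ⟨l, rfl⟩ := hx; exact key δ hδ l
  | zero => simp
  | add a b _ _ ha hb =>
      have : ∀ j : Fin n, X j * δ j (a + b) - δ j (a + b) * X j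
          = (X j * δ j a - δ j a * X j) + (X j * δ j b - δ j b * X j) := by
        intro j; rw [map_add, mul_add, add_mul]; abel
      rw [Finset.sum_congr rfl (fun j _ => this j), Finset.sum_add_distrib, ha, hb, add_zero]
  | smul c a _ ha =>
      have : ∀ j : Fin n, X j * δ j (c • a) - δ j (c • a) * X j
          = c • (X j * δ j a - δ j a * X j) := by
        intro j; rw [map_smul, smul_sub, mul_smul_comm, smul_mul_assoc]
      rw [Finset.sum_congr rfl (fun j _ => this j), ← Finset.smul_sum, ha, smul_zero]
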